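/- arXiv:1511.07674 — 5 statements merged into one kernel-verified Lean document; each statement's English description precedes it below -/
import Mathlib

section
/- The map P ↦ (-1)^(dim P) · 𝟙[0 ∈ relint P] is a valuation on the set of convex polytopes in ℝⁿ containing the origin: if P, Q, and P ∪ Q are convex polytopes containing 0 (with P ∪ Q convex), then Φ(P) + Φ(Q) = Φ(P ∪ Q) + Φ(P ∩ Q). -/
open MeasureTheory Classical

/-- A convex polytope in `ℝⁿ`: the convex hull of a nonempty finite set of points. -/
def IsPolytope {n : ℕ} (P : Set (Fin n → ℝ)) : Prop :=
  ∃ S : Finset (Fin n → ℝ), S.Nonempty ∧ P = convexHull ℝ (S : Set (Fin n → ℝ))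

/-- The dimension of a polytope: the dimension of its affine hull. -/
noncomputable def pdim {n : ℕ} (P : Set (Fin n → ℝ)) : ℕ :=
  Module.finrank ℝ (affineSpan ℝ P).direction

/-- `Φ(P) = (-1)^(dim P) · 𝟙[0 ∈ relint P]`. -/
noncomputable def Phi {n : ℕ} (P : Set (Fin n → ℝ)) : ℝ :=
  if (0 : Fin n → ℝ) ∈ intrinsicInterior ℝ P then (-1 : ℝ) ^ pdim P else 0

/-!
Near the origin a convex set `P ∋ 0` looks like its cone `C_P = ⋃_{t > 0} t⁻¹ • P`
(`PointedCone.hull ℝ P`): `0 ∈ relint P` exactly when `C_P` is a linear subspace, and then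
`dim P = dim C_P`. Hence `Φ(P) = σ(C_P)`, where `σ(C) = (-1)^(dim C)` if `C` is a subspace and
`σ(C) = 0` otherwise (`PointedCone.subspaceSign`). The cone of an intersection is the
intersection of the cones, and since `P ∪ Q` is convex the cone of the union is the union of the
cones; cones of polytopes are finitely generated, hence closed by Carathéodory's theorem for cones.

So it suffices that `σ` is a valuation on closed convex cones `C`, `D` with `C ∪ D` convex. If `C`
and `D` are nested there is nothing to prove. Otherwise neither is a subspace (a segment from
`C \ D` to `D \ C` crosses `C ∩ D`), and `C ∪ D` is a subspace if and only if `C ∩ D` is. One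
direction uses such segments again; for the other, a functional separating a point of `D \ C`
from `C` shows that `C` and `D` are the two closed half-spaces it cuts out of the subspace
`C ∪ D`. Then `C ∩ D` is a hyperplane of `C ∪ D`, and the two remaining terms cancel.
-/

open Set Submodule Module Topology

lemma vectorSpan_eq_span_of_zero_mem (k : Type*) {V : Type*} [Ring k] [AddCommGroup V]
    [Module k V] {s : Set V} (h0 : (0 : V) ∈ s) : vectorSpan k s = span k s := by
  simp [vectorSpan_eq_span_vsub_set_right k h0]

lemma Submodule.finrank_inf_ker_add_one {K V : Type*} [Field K] [AddCommGroup V] [Module K V]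
    [FiniteDimensional K V] {W : Submodule K V} {f : V →ₗ[K] K} {w : V} (hw : w ∈ W)
    (hfw : f w ≠ 0) : finrank K ↥(W ⊓ LinearMap.ker f) + 1 = finrank K W := by
  have hg : f.comp W.subtype ≠ 0 := fun h => hfw (by simpa using LinearMap.congr_fun h ⟨w, hw⟩)
  rw [← Module.Dual.finrank_ker_add_one_of_ne_zero hg, LinearMap.ker_comp,
    ← Submodule.map_comap_subtype, ← (Submodule.equivSubtypeMap W _).finrank_eq]

lemma Convex.smul_mem_of_smul_mem {E : Type*} [AddCommGroup E] [Module ℝ E] {s : Set E}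
    (hs : Convex ℝ s) (h0 : (0 : E) ∈ s) {x : E} {a b : ℝ} (ha : 0 < a) (hax : a • x ∈ s)
    (hb : 0 ≤ b) (hba : b ≤ a) : b • x ∈ s := by
  simpa [smul_smul, div_mul_cancel₀ b ha.ne'] using
    hs.smul_mem_of_zero_mem h0 hax ⟨div_nonneg hb ha.le, (div_le_one ha).2 hba⟩

section ConvexSets

variable {E : Type*} [NormedAddCommGroup E] [NormedSpace ℝ E]

lemma exists_mem_segment_inter_of_convex_union {s t : Set E} (hs : IsClosed s)
    (ht : IsClosed t) (hst : Convex ℝ (s ∪ t)) {x y : E} (hx : x ∈ s) (hy : y ∈ t) :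
    ∃ z ∈ segment ℝ x y, z ∈ s ∩ t :=
  isPreconnected_closed_iff.1 (convex_segment x y).isPreconnected s t hs ht
    (hst.segment_subset (Or.inl hx) (Or.inr hy)) ⟨x, left_mem_segment ℝ x y, hx⟩
    ⟨y, right_mem_segment ℝ x y, hy⟩

lemma IsClosed.mem_of_apply_nonpos {s : Set E} (hs : IsClosed s) {W : Submodule ℝ E}
    {f : E →ₗ[ℝ] ℝ} {w : E} (hw : w ∈ W) (hfw : f w < 0) (h : ∀ y ∈ W, f y < 0 → y ∈ s)
    {y : E} (hy : y ∈ W) (hfy : f y ≤ 0) : y ∈ s := by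
  have hray : Ioi (0 : ℝ) ⊆ (fun t : ℝ => y + t • w) ⁻¹' s := fun t ht =>
    h _ (W.add_mem hy (W.smul_mem t hw))
      (by simpa using add_neg_of_nonpos_of_neg hfy (mul_neg_of_pos_of_neg ht hfw))
  have h0 := (hs.preimage (by fun_prop)).closure_subset_iff.2 hray
    (by rw [closure_Ioi]; exact self_mem_Ici)
  simpa using h0

lemma intrinsicInterior_eq_interior_of_affineSpan_eq_top {s : Set E} (h : affineSpan ℝ s = ⊤) :
    intrinsicInterior ℝ s = interior s := by
  have hopen : IsOpen (affineSpan ℝ s : Set E) := by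
    rw [h, AffineSubspace.top_coe]
    exact isOpen_univ
  have hmap : IsOpenMap ((↑) : affineSpan ℝ s → E) := hopen.isOpenMap_subtype_val
  rw [intrinsicInterior, ← hmap.preimage_interior_eq_interior_preimage continuous_subtype_val,
    image_preimage_eq_of_subset]
  rw [Subtype.range_coe, h, AffineSubspace.top_coe]
  exact subset_univ _

variable [FiniteDimensional ℝ E]

lemma Convex.zero_mem_interior_iff {s : Set E} (hs : Convex ℝ s) :
    (0 : E) ∈ interior s ↔ ∀ x, ∃ t : ℝ, 0 < t ∧ t • x ∈ s := by
  constructor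
  · intro h x
    have hev : ∀ᶠ t in 𝓝 (0 : ℝ), t • x ∈ s :=
      (continuous_id.smul continuous_const).tendsto' 0 0 (zero_smul ℝ x)
        (mem_interior_iff_mem_nhds.1 h)
    obtain ⟨t, hts, ht⟩ := ((hev.filter_mono nhdsWithin_le_nhds).and
      (self_mem_nhdsWithin : Ioi (0 : ℝ) ∈ 𝓝[>] 0)).exists
    exact ⟨t, ht, hts⟩
  · intro h
    have h0 : (0 : E) ∈ s := by simpa using (h 0).choose_spec.2
    have hspan : affineSpan ℝ s = ⊤ := by
      rw [AffineSubspace.affineSpan_eq_top_iff_vectorSpan_eq_top_of_nonempty ℝ E E ⟨0, h0⟩,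
        vectorSpan_eq_span_of_zero_mem ℝ h0, eq_top_iff]
      intro x _
      obtain ⟨t, ht, htx⟩ := h x
      simpa [smul_smul, inv_mul_cancel₀ ht.ne'] using span ℝ s |>.smul_mem t⁻¹ (subset_span htx)
    obtain ⟨y, hy⟩ := hs.interior_nonempty_iff_affineSpan_eq_top.2 hspan
    obtain ⟨δ, hδ, hδy⟩ := h (-y)
    convert hs.combo_interior_self_mem_interior hy hδy (a := δ / (1 + δ)) (b := 1 / (1 + δ))
      (by positivity) (by positivity) (by field_simp; ring) using 1
    rw [smul_smul, smul_neg, ← sub_eq_add_neg, div_mul_eq_mul_div, one_mul, sub_self]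

lemma zero_mem_intrinsicInterior_iff {P : Set E} (hP : Convex ℝ P) (h0 : (0 : E) ∈ P) :
    (0 : E) ∈ intrinsicInterior ℝ P ↔ ∀ x ∈ span ℝ P, ∃ t : ℝ, 0 < t ∧ t • x ∈ P := by
  set W := span ℝ P
  let P₀ : Set W := (↑) ⁻¹' P
  let φ := W.subtypeₗᵢ.toAffineIsometry
  have himg : φ '' P₀ = P := image_preimage_eq_of_subset (by simp [φ, W])
  have h0₀ : (0 : W) ∈ P₀ := h0
  have hspan : affineSpan ℝ P₀ = ⊤ := by
    rw [AffineSubspace.affineSpan_eq_top_iff_vectorSpan_eq_top_of_nonempty ℝ W W ⟨0, h0₀⟩,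
      vectorSpan_eq_span_of_zero_mem ℝ h0₀]
    exact span_span_coe_preimage
  have hrel : (0 : E) ∈ intrinsicInterior ℝ P ↔ (0 : W) ∈ interior P₀ := by
    rw [← himg, AffineIsometry.intrinsicInterior_image,
      intrinsicInterior_eq_interior_of_affineSpan_eq_top hspan, show (0 : E) = φ 0 from rfl,
      φ.injective.mem_set_image]
  have hP₀ : Convex ℝ P₀ := hP.linear_preimage W.subtype
  rw [hrel, hP₀.zero_mem_interior_iff, Subtype.forall]
  rfl

end ConvexSets

namespace PointedCone

section Hull

variable {E : Type*} [AddCommGroup E] [Module ℝ E]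

def IsSubspace (C : PointedCone ℝ E) : Prop := ∀ x ∈ C, -x ∈ C

noncomputable def subspaceSign (C : PointedCone ℝ E) : ℝ :=
  if C.IsSubspace then (-1) ^ finrank ℝ C.lineal else 0

lemma coe_lineal_of_isSubspace {C : PointedCone ℝ E} (h : C.IsSubspace) :
    (C.lineal : Set E) = C :=
  Set.ext fun x => ⟨And.left, fun hx => ⟨hx, h x hx⟩⟩

lemma isSubspace_of_coe_eq {C : PointedCone ℝ E} {W : Submodule ℝ E} (h : (C : Set E) = W) :
    C.IsSubspace := fun x hx => by
  rw [← SetLike.mem_coe, h] at hx ⊢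
  exact W.neg_mem hx

lemma lineal_hull_eq_span {s : Set E} (h : (hull ℝ s).IsSubspace) :
    (hull ℝ s).lineal = span ℝ s :=
  le_antisymm (fun _ hx => hull_le_span ℝ s hx.1)
    (span_le.2 fun x hx => ⟨subset_hull hx, h x (subset_hull hx)⟩)

lemma mem_hull_of_smul_mem {s : Set E} {x : E} {t : ℝ} (ht : 0 < t) (h : t • x ∈ s) :
    x ∈ hull ℝ s :=
  ((hull ℝ s).smul_mem_iff ht).1 (subset_hull h)

lemma mem_hull_iff_of_convex {s : Set E} (hs : Convex ℝ s) (h0 : (0 : E) ∈ s) {x : E} :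
    x ∈ hull ℝ s ↔ ∃ t : ℝ, 0 < t ∧ t • x ∈ s := by
  refine ⟨fun hx => ?_, fun ⟨t, ht, h⟩ => mem_hull_of_smul_mem ht h⟩
  have hle : hull ℝ s ≤ (ConvexCone.hull ℝ s).toPointedCone (ConvexCone.subset_hull h0) :=
    span_le.2 ConvexCone.subset_hull
  obtain ⟨r, hr, y, hy, rfl⟩ := (ConvexCone.mem_hull_of_convex hs).1 (hle hx)
  exact ⟨r⁻¹, inv_pos.2 hr, by rwa [smul_smul, inv_mul_cancel₀ hr.ne', one_smul]⟩

lemma hull_inter_of_convex {s t : Set E} (hs : Convex ℝ s) (ht : Convex ℝ t) (hs0 : (0 : E) ∈ s)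
    (ht0 : (0 : E) ∈ t) : hull ℝ (s ∩ t) = hull ℝ s ⊓ hull ℝ t := by
  refine le_antisymm (le_inf (span_mono inter_subset_left) (span_mono inter_subset_right)) ?_
  rintro x ⟨hxs, hxt⟩
  obtain ⟨a, ha, hax⟩ := (mem_hull_iff_of_convex hs hs0).1 hxs
  obtain ⟨b, hb, hbx⟩ := (mem_hull_iff_of_convex ht ht0).1 hxt
  exact mem_hull_of_smul_mem (lt_min ha hb)
    ⟨hs.smul_mem_of_smul_mem hs0 ha hax (lt_min ha hb).le (min_le_left a b),
      ht.smul_mem_of_smul_mem ht0 hb hbx (lt_min ha hb).le (min_le_right a b)⟩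

lemma hull_union (s t : Set E) : hull ℝ (s ∪ t) = hull ℝ s ⊔ hull ℝ t :=
  span_union s t

lemma coe_hull_union_of_convex {s t : Set E} (hst : Convex ℝ (s ∪ t)) (h0 : (0 : E) ∈ s ∪ t) :
    (hull ℝ (s ∪ t) : Set E) = (hull ℝ s : Set E) ∪ hull ℝ t := by
  refine subset_antisymm (fun x hx => ?_) (union_subset (span_mono subset_union_left)
    (span_mono subset_union_right))
  obtain ⟨r, hr, hs | ht⟩ := (mem_hull_iff_of_convex hst h0).1 hx
  exacts [Or.inl (mem_hull_of_smul_mem hr hs), Or.inr (mem_hull_of_smul_mem hr ht)]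

lemma coe_sup_eq_union_of_convex {C D : PointedCone ℝ E} (h : Convex ℝ ((C : Set E) ∪ D)) :
    ((C ⊔ D : PointedCone ℝ E) : Set E) = (C : Set E) ∪ D := by
  simpa [span_union] using coe_hull_union_of_convex h (Or.inl C.zero_mem)

lemma hull_convexHull (s : Set E) : hull ℝ (convexHull ℝ s) = hull ℝ s :=
  le_antisymm (span_le.2 (convexHull_min subset_hull (hull ℝ s).convex))
    (span_mono (subset_convexHull ℝ s))

lemma mem_hull_finset_iff {s : Finset E} {x : E} :
    x ∈ hull ℝ (s : Set E) ↔ ∃ c : E → ℝ, (∀ y ∈ s, 0 ≤ c y) ∧ ∑ y ∈ s, c y • y = x := by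
  constructor
  · rw [hull, Submodule.mem_span_finset]
    rintro ⟨c, -, rfl⟩
    exact ⟨fun y => c y, fun y _ => (c y).2, by simp⟩
  · rintro ⟨c, hc, rfl⟩
    exact Submodule.sum_mem _ fun y hy => (hull ℝ _).smul_mem (hc y hy) (subset_hull hy)

lemma exists_mem_hull_erase {s : Finset E} (h : ¬LinearIndepOn ℝ id (s : Set E)) {x : E}
    (hx : x ∈ hull ℝ (s : Set E)) : ∃ y ∈ s, x ∈ hull ℝ (s.erase y : Set E) := by
  obtain ⟨c, hc, rfl⟩ := mem_hull_finset_iff.1 hx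
  obtain ⟨g, hg, i, hi, hgi⟩ : ∃ g : E → ℝ, ∑ y ∈ s, g y • y = 0 ∧ ∃ i ∈ s, 0 < g i := by
    obtain ⟨g, hg, i, hi, hgi⟩ := not_linearIndepOn_finset_iff.1 h
    rcases hgi.lt_or_gt with hneg | hpos
    · exact ⟨-g, by simpa [Finset.sum_neg_distrib] using hg, i, hi, by simpa⟩
    · exact ⟨g, hg, i, hi, hpos⟩
  -- Subtract the largest multiple of the relation `g` that keeps all coefficients nonnegative.
  obtain ⟨j, hj, hmin⟩ := (s.filter (0 < g ·)).exists_min_image (fun y => c y / g y)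
    ⟨i, Finset.mem_filter.2 ⟨hi, hgi⟩⟩
  rw [Finset.mem_filter] at hj
  let k := fun y => c y - c j / g j * g y
  have hkj : k j = 0 := by simp [k, hj.2.ne']
  refine ⟨j, hj.1, mem_hull_finset_iff.2 ⟨k, fun y hy => ?_, ?_⟩⟩
  · have hcy := hc y (Finset.mem_of_mem_erase hy)
    rcases le_or_gt (g y) 0 with hgy | hgy
    · nlinarith [div_nonneg (hc j hj.1) hj.2.le]
    · have := hmin y (Finset.mem_filter.2 ⟨Finset.mem_of_mem_erase hy, hgy⟩)
      rw [le_div_iff₀ hgy] at this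
      simp only [k]
      linarith
  · rw [Finset.sum_erase _ (by rw [hkj, zero_smul])]
    simp only [k, sub_smul, mul_smul, Finset.sum_sub_distrib, ← Finset.smul_sum, hg, smul_zero,
      sub_zero]

lemma exists_linearIndepOn_subset_mem_hull {s : Finset E} {x : E}
    (hx : x ∈ hull ℝ (s : Set E)) :
    ∃ t ⊆ s, LinearIndepOn ℝ id (t : Set E) ∧ x ∈ hull ℝ (t : Set E) := by
  induction s using Finset.strongInduction with
  | H s ih =>
    by_cases h : LinearIndepOn ℝ id (s : Set E)
    · exact ⟨s, subset_rfl, h, hx⟩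
    obtain ⟨y, hy, hxy⟩ := exists_mem_hull_erase h hx
    obtain ⟨t, hts, ht, hxt⟩ := ih _ (Finset.erase_ssubset hy) hxy
    exact ⟨t, hts.trans (Finset.erase_subset y s), ht, hxt⟩

variable [TopologicalSpace E] [IsTopologicalAddGroup E] [ContinuousSMul ℝ E] [T2Space E]

lemma isClosed_hull_of_linearIndepOn {s : Finset E} (hs : LinearIndepOn ℝ id (s : Set E)) :
    IsClosed (hull ℝ (s : Set E) : Set E) := by
  let L := Fintype.linearCombination ℝ ((↑) : s → E)
  have hL : IsClosedEmbedding L := L.isClosedEmbedding_of_injective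
    (LinearMap.ker_eq_bot.2 (linearIndependent_iff_injective_fintypeLinearCombination.1 hs))
  have himage : (hull ℝ (s : Set E) : Set E) = L '' Ici 0 := by
    ext x
    constructor
    · intro hx
      obtain ⟨c, hc, rfl⟩ := mem_hull_finset_iff.1 hx
      exact ⟨fun i => c i, fun i => hc i i.2, by
        simpa [L, Fintype.linearCombination_apply] using Finset.sum_attach s (fun y => c y • y)⟩
    · rintro ⟨c, hc, rfl⟩
      exact Submodule.sum_mem _ fun i _ => (hull ℝ _).smul_mem (hc i) (subset_hull i.2)
  rw [himage]
  exact hL.isClosedMap _ isClosed_Ici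

lemma isClosed_hull_finset (s : Finset E) : IsClosed (hull ℝ (s : Set E) : Set E) := by
  have hunion : (hull ℝ (s : Set E) : Set E) =
      ⋃ t ∈ s.powerset.filter (fun t : Finset E => LinearIndepOn ℝ id (t : Set E)),
        (hull ℝ (t : Set E) : Set E) := by
    refine subset_antisymm (fun x hx => ?_) (iUnion₂_subset fun t ht => ?_)
    · obtain ⟨t, hts, ht, hxt⟩ := exists_linearIndepOn_subset_mem_hull hx
      exact mem_iUnion₂.2 ⟨t, Finset.mem_filter.2 ⟨Finset.mem_powerset.2 hts, ht⟩, hxt⟩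
    · exact span_mono (Finset.coe_subset.2 (Finset.mem_powerset.1 (Finset.mem_filter.1 ht).1))
  rw [hunion]
  exact isClosed_biUnion_finset fun t ht =>
    isClosed_hull_of_linearIndepOn (Finset.mem_filter.1 ht).2

end Hull

section Valuation

variable {E : Type*} [NormedAddCommGroup E] [NormedSpace ℝ E] {C D : PointedCone ℝ E}

lemma le_or_le_of_isSubspace (hC : C.IsSubspace) (hCc : IsClosed (C : Set E))
    (hDc : IsClosed (D : Set E)) (hconv : Convex ℝ ((C : Set E) ∪ D)) : C ≤ D ∨ D ≤ C := by
  refine or_iff_not_imp_right.2 fun hDC c hc => ?_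
  obtain ⟨d, hdD, hdC⟩ := SetLike.not_le_iff_exists.1 hDC
  obtain ⟨_, ⟨a, b, ha, hb, hab, rfl⟩, hzC, hzD⟩ :=
    exists_mem_segment_inter_of_convex_union hCc hDc hconv hc hdD
  rcases hb.eq_or_lt with rfl | hb
  · simpa [show a = 1 by linarith] using hzD
  have hbd : b • d ∈ C := by
    simpa using C.add_mem hzC (C.smul_mem ha (hC c hc))
  exact absurd ((C.smul_mem_iff hb).1 hbd) hdC

lemma neg_mem_of_isSubspace_inf (hCc : IsClosed (C : Set E)) (hDc : IsClosed (D : Set E))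
    (hconv : Convex ℝ ((C : Set E) ∪ D)) (hI : (C ⊓ D).IsSubspace) {x d : E} (hx : x ∈ C)
    (hd : d ∈ D) (hdC : d ∉ C) : -x ∈ D := by
  obtain ⟨_, ⟨a, b, ha, hb, hab, rfl⟩, hz⟩ :=
    exists_mem_segment_inter_of_convex_union hCc hDc hconv hx hd
  rcases ha.eq_or_lt with rfl | ha
  · exact absurd (by simpa [show b = 1 by linarith] using hz.1) hdC
  have hax : -(a • x) ∈ D := by
    simpa using D.add_mem (D.smul_mem hb hd) (hI _ hz).2
  rw [← smul_neg] at hax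
  exact (D.smul_mem_iff ha).1 hax

lemma isSubspace_sup_of_isSubspace_inf (hCc : IsClosed (C : Set E)) (hDc : IsClosed (D : Set E))
    (hconv : Convex ℝ ((C : Set E) ∪ D)) (hI : (C ⊓ D).IsSubspace) (hCD : ¬C ≤ D)
    (hDC : ¬D ≤ C) : (C ⊔ D).IsSubspace := by
  obtain ⟨c, hcC, hcD⟩ := SetLike.not_le_iff_exists.1 hCD
  obtain ⟨d, hdD, hdC⟩ := SetLike.not_le_iff_exists.1 hDC
  intro x hx
  rw [← SetLike.mem_coe, coe_sup_eq_union_of_convex hconv] at hx ⊢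
  rcases hx with hx | hx
  · exact Or.inr (neg_mem_of_isSubspace_inf hCc hDc hconv hI hx hdD hdC)
  · exact Or.inl (neg_mem_of_isSubspace_inf hDc hCc (by rwa [union_comm]) (by rwa [inf_comm])
      hx hcC hcD)

lemma apply_nonpos_of_not_isSubspace {W : Submodule ℝ E} (hW : (W : Set E) = (C : Set E) ∪ D)
    (hD : ¬D.IsSubspace) {f : E →ₗ[ℝ] ℝ} (hfC : ∀ x ∈ C, 0 ≤ f x) {y : E} (hy : y ∈ D) :
    f y ≤ 0 := by
  by_contra! hfy
  refine hD fun x hx => ?_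
  -- For large `s`, `-x - s • y ∈ W` has `f < 0`, so it lies in `D`; adding `s • y` gives `-x`.
  have hxW : -x ∈ W := W.neg_mem ((Set.ext_iff.1 hW x).2 (Or.inr hx))
  set s := (|f (-x)| + 1) / f y
  have hs : 0 < s := by positivity
  have hmem : -x - s • y ∈ (W : Set E) :=
    W.sub_mem hxW (W.smul_mem s ((Set.ext_iff.1 hW y).2 (Or.inr hy)))
  rw [hW] at hmem
  have hD' : -x - s • y ∈ D := hmem.resolve_left fun hC => by
    have := hfC _ hC
    rw [map_sub, map_smul, smul_eq_mul, div_mul_cancel₀ _ hfy.ne'] at this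
    linarith [le_abs_self (f (-x))]
  simpa using D.add_mem hD' (D.smul_mem hs.le hy)

lemma exists_coe_inf_eq_inf_ker [FiniteDimensional ℝ E] (hCc : IsClosed (C : Set E))
    (hDc : IsClosed (D : Set E)) {W : Submodule ℝ E} (hW : (W : Set E) = (C : Set E) ∪ D)
    (hD : ¬D.IsSubspace) (hDC : ¬D ≤ C) :
    ∃ f : E →ₗ[ℝ] ℝ, ∃ w ∈ W, f w ≠ 0 ∧
      ((C ⊓ D : PointedCone ℝ E) : Set E) = ↑(W ⊓ LinearMap.ker f) := by
  obtain ⟨d, hdD, hdC⟩ := SetLike.not_le_iff_exists.1 hDC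
  obtain ⟨f, hfC, hfd⟩ := ProperCone.hyperplane_separation_point ⟨C, hCc⟩ hdC
  have hmem : ∀ y, y ∈ W ↔ y ∈ C ∨ y ∈ D := Set.ext_iff.1 hW
  have hdW : d ∈ W := (hmem d).2 (Or.inr hdD)
  have hfD : ∀ y ∈ D, f y ≤ 0 := fun y hy => apply_nonpos_of_not_isSubspace hW hD (f := f) hfC hy
  have hDhalf : ∀ y ∈ W, f y ≤ 0 → y ∈ D := fun _ =>
    hDc.mem_of_apply_nonpos (f := f) hdW hfd fun z hz hfz =>
      ((hmem z).1 hz).resolve_left fun hzC => (hfC z hzC).not_gt hfz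
  have hChalf : ∀ y ∈ W, 0 ≤ f y → y ∈ C := fun y hy hfy =>
    hCc.mem_of_apply_nonpos (f := -(f : E →ₗ[ℝ] ℝ)) (W.neg_mem hdW) (by simpa using hfd)
      (fun z hz hfz => ((hmem z).1 hz).resolve_right fun hzD =>
        (hfD z hzD).not_gt (by simpa using hfz)) hy (by simpa using hfy)
  refine ⟨f, d, hdW, hfd.ne, Set.ext fun y => ⟨fun ⟨hyC, hyD⟩ => ⟨?_, ?_⟩, fun ⟨hyW, hfy⟩ => ?_⟩⟩
  · exact (hmem y).2 (Or.inl hyC)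
  · exact le_antisymm (hfD y hyD) (hfC y hyC)
  · exact ⟨hChalf y hyW (le_of_eq (Eq.symm hfy)), hDhalf y hyW (le_of_eq hfy)⟩

theorem subspaceSign_sup_add_subspaceSign_inf [FiniteDimensional ℝ E]
    (hCc : IsClosed (C : Set E)) (hDc : IsClosed (D : Set E))
    (hconv : Convex ℝ ((C : Set E) ∪ D)) :
    (C ⊔ D).subspaceSign + (C ⊓ D).subspaceSign = C.subspaceSign + D.subspaceSign := by
  by_cases hCD : C ≤ D
  · rw [sup_eq_right.2 hCD, inf_eq_left.2 hCD, add_comm]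
  by_cases hDC : D ≤ C
  · rw [sup_eq_left.2 hDC, inf_eq_right.2 hDC]
  have hC : ¬C.IsSubspace := fun h => (le_or_le_of_isSubspace h hCc hDc hconv).elim hCD hDC
  have hD : ¬D.IsSubspace := fun h =>
    (le_or_le_of_isSubspace h hDc hCc (by rwa [union_comm])).elim hDC hCD
  have hW (hU : (C ⊔ D).IsSubspace) : ((C ⊔ D).lineal : Set E) = (C : Set E) ∪ D :=
    (coe_lineal_of_isSubspace hU).trans (coe_sup_eq_union_of_convex hconv)
  by_cases hI : (C ⊓ D).IsSubspace
  · have hU := isSubspace_sup_of_isSubspace_inf hCc hDc hconv hI hCD hDC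
    obtain ⟨f, w, hw, hfw, hinf⟩ := exists_coe_inf_eq_inf_ker hCc hDc (hW hU) hD hDC
    have hlin : (C ⊓ D).lineal = (C ⊔ D).lineal ⊓ LinearMap.ker f :=
      SetLike.coe_injective ((coe_lineal_of_isSubspace hI).trans hinf)
    simp only [subspaceSign, if_neg hC, if_neg hD, if_pos hU, if_pos hI]
    rw [hlin, ← Submodule.finrank_inf_ker_add_one hw hfw, pow_succ]
    ring
  · have hU : ¬(C ⊔ D).IsSubspace := fun hU =>
      let ⟨_, _, _, _, hinf⟩ := exists_coe_inf_eq_inf_ker hCc hDc (hW hU) hD hDC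
      hI (isSubspace_of_coe_eq hinf)
    simp only [subspaceSign, if_neg hC, if_neg hD, if_neg hU, if_neg hI, add_zero]

lemma zero_mem_intrinsicInterior_iff_isSubspace [FiniteDimensional ℝ E] {P : Set E}
    (hP : Convex ℝ P) (h0 : (0 : E) ∈ P) :
    (0 : E) ∈ intrinsicInterior ℝ P ↔ (hull ℝ P).IsSubspace := by
  simp_rw [zero_mem_intrinsicInterior_iff hP h0, ← mem_hull_iff_of_convex hP h0]
  refine ⟨fun h x hx => h _ (neg_mem (hull_le_span ℝ P hx)), fun h x hx => ?_⟩
  rw [← lineal_hull_eq_span h] at hx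
  exact hx.1

end Valuation

end PointedCone

open PointedCone

lemma pdim_eq_finrank_span {n : ℕ} {P : Set (Fin n → ℝ)} (h0 : (0 : Fin n → ℝ) ∈ P) :
    pdim P = finrank ℝ (span ℝ P) := by
  rw [pdim, direction_affineSpan, vectorSpan_eq_span_of_zero_mem ℝ h0]

lemma Phi_eq_subspaceSign_hull {n : ℕ} {P : Set (Fin n → ℝ)} (hP : Convex ℝ P)
    (h0 : (0 : Fin n → ℝ) ∈ P) : Phi P = (hull ℝ P).subspaceSign := by
  have key := zero_mem_intrinsicInterior_iff_isSubspace hP h0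
  by_cases h : (hull ℝ P).IsSubspace
  · rw [Phi, subspaceSign, if_pos (key.2 h), if_pos h, pdim_eq_finrank_span h0,
      lineal_hull_eq_span h]
  · rw [Phi, subspaceSign, if_neg (mt key.1 h), if_neg h]

lemma IsPolytope.convex {n : ℕ} {P : Set (Fin n → ℝ)} (hP : IsPolytope P) : Convex ℝ P := by
  obtain ⟨S, -, rfl⟩ := hP
  exact convex_convexHull ℝ _

lemma IsPolytope.isClosed_hull {n : ℕ} {P : Set (Fin n → ℝ)} (hP : IsPolytope P) :
    IsClosed (hull ℝ P : Set (Fin n → ℝ)) := by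
  obtain ⟨S, -, rfl⟩ := hP
  rw [hull_convexHull]
  exact isClosed_hull_finset S

theorem phi_is_valuation_general (n : ℕ) (P Q : Set (Fin n → ℝ))
    (hP : IsPolytope P) (hQ : IsPolytope Q)
    (h0P : (0 : Fin n → ℝ) ∈ P) (h0Q : (0 : Fin n → ℝ) ∈ Q)
    (hPQ : Convex ℝ (P ∪ Q)) :
    Phi P + Phi Q = Phi (P ∪ Q) + Phi (P ∩ Q) := by
  have hconv : Convex ℝ ((hull ℝ P : Set (Fin n → ℝ)) ∪ hull ℝ Q) :=
    coe_hull_union_of_convex hPQ (Or.inl h0P) ▸ (hull ℝ (P ∪ Q)).convex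
  rw [Phi_eq_subspaceSign_hull hP.convex h0P, Phi_eq_subspaceSign_hull hQ.convex h0Q,
    Phi_eq_subspaceSign_hull hPQ (Or.inl h0P),
    Phi_eq_subspaceSign_hull (hP.convex.inter hQ.convex) ⟨h0P, h0Q⟩, hull_union,
    hull_inter_of_convex hP.convex hQ.convex h0P h0Q]
  exact (subspaceSign_sup_add_subspaceSign_inf hP.isClosed_hull hQ.isClosed_hull hconv).symm

theorem phi_is_valuation (n : ℕ) (hn : 2 ≤ n) (P Q : Set (Fin n → ℝ))
    (hP : IsPolytope P) (hQ : IsPolytope Q)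
    (h0P : (0 : Fin n → ℝ) ∈ P) (h0Q : (0 : Fin n → ℝ) ∈ Q)
    (hPQ : Convex ℝ (P ∪ Q)) :
    Phi P + Phi Q = Phi (P ∪ Q) + Phi (P ∩ Q) :=
  phi_is_valuation_general n P Q hP hQ h0P h0Q hPQ
end

section
/- If P and Q are convex polytopes in ℝⁿ whose union P ∪ Q is convex, and neither P ⊆ Q nor Q ⊆ P, then P and Q have the same affine hull; in particular dim P = dim Q = dim(P ∪ Q). -/
open MeasureTheory Classical

/-! If `q ∈ Q \ P` with `P` closed, then for every `x ∈ P` the points of the segment `[q, x]` close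
to `q` avoid `P`, so by convexity of `P ∪ Q` they lie in `Q`. Such a point `y ≠ q` together with `q`
spans the line through `q` and `x`, hence `x ∈ aff Q`. Thus `P ⊆ aff Q`, and symmetrically
`Q ⊆ aff P`. -/

open Filter Topology AffineMap

section

variable {E : Type*} [AddCommGroup E] [Module ℝ E] [TopologicalSpace E]
  [IsTopologicalAddGroup E] [ContinuousSMul ℝ E]

theorem subset_affineSpan_of_convex_union {P Q : Set E} (hP : IsClosed P)
    (hPQ : Convex ℝ (P ∪ Q)) {q : E} (hqQ : q ∈ Q) (hqP : q ∉ P) :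
    P ⊆ affineSpan ℝ Q := by
  intro x hx
  have hnear : ∀ᶠ t in 𝓝 (0 : ℝ), lineMap q x t ∈ Pᶜ ∧ t < 1 :=
    (lineMap_continuous.tendsto' 0 q (lineMap_apply_zero q x)
      |>.eventually_mem (hP.isOpen_compl.mem_nhds hqP)).and (Iio_mem_nhds one_pos)
  obtain ⟨t, ht0, hyP, ht1⟩ := hnear.exists_gt
  have hyQ : lineMap q x t ∈ Q :=
    (hPQ.lineMap_mem (Or.inr hqQ) (Or.inl hx) ⟨ht0.le, ht1.le⟩).resolve_left hyP
  have hwbtw : Wbtw ℝ q (lineMap q x t) x := ⟨t, ⟨ht0.le, ht1.le⟩, rfl⟩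
  exact AffineSubspace.right_mem_of_wbtw hwbtw (subset_affineSpan ℝ Q hqQ)
    (subset_affineSpan ℝ Q hyQ) fun h ↦ by
      rcases lineMap_eq_left_iff.1 h.symm with rfl | h0
      · exact hqP hx
      · exact ht0.ne' h0

theorem affineSpan_eq_of_convex_union {P Q : Set E} (hP : IsClosed P) (hQ : IsClosed Q)
    (hPQ : Convex ℝ (P ∪ Q)) (hPQ' : ¬ P ⊆ Q) (hQP' : ¬ Q ⊆ P) :
    affineSpan ℝ P = affineSpan ℝ Q := by
  obtain ⟨q, hqQ, hqP⟩ := Set.not_subset.1 hQP'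
  obtain ⟨p, hpP, hpQ⟩ := Set.not_subset.1 hPQ'
  exact le_antisymm (affineSpan_le.2 (subset_affineSpan_of_convex_union hP hPQ hqQ hqP))
    (affineSpan_le.2 (subset_affineSpan_of_convex_union hQ (Set.union_comm P Q ▸ hPQ) hpP hpQ))

end

theorem IsPolytope.isClosed {n : ℕ} {P : Set (Fin n → ℝ)} (hP : IsPolytope P) : IsClosed P := by
  obtain ⟨S, -, rfl⟩ := hP
  exact (S.finite_toSet.isCompact_convexHull (𝕜 := ℝ)).isClosed

theorem union_convex_same_affine_hull (n : ℕ) (P Q : Set (Fin n → ℝ))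
    (hP : IsPolytope P) (hQ : IsPolytope Q) (hPQ : Convex ℝ (P ∪ Q))
    (hPQ' : ¬ P ⊆ Q) (hQP' : ¬ Q ⊆ P) :
    affineSpan ℝ P = affineSpan ℝ Q ∧
      pdim P = pdim (P ∪ Q) ∧ pdim Q = pdim (P ∪ Q) := by
  have hspan := affineSpan_eq_of_convex_union hP.isClosed hQ.isClosed hPQ hPQ' hQP'
  have hunion : affineSpan ℝ (P ∪ Q) = affineSpan ℝ P := by
    rw [AffineSubspace.span_union, hspan, sup_idem]
  exact ⟨hspan, by rw [pdim, pdim, hunion], by rw [pdim, pdim, hunion, hspan]⟩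
end

section
/- The function P ↦ (-1)^(dim P)·𝟙[0 ∈ relint P] is Borel measurable on the space of convex polytopes in ℝⁿ equipped with the Hausdorff metric. -/
open MeasureTheory Classical TopologicalSpace

/-- The space of convex polytopes in `ℝⁿ` with the Hausdorff metric topology. -/
def PolytopeSpace (n : ℕ) : Type :=
  {K : NonemptyCompacts (Fin n → ℝ) // IsPolytope (K : Set (Fin n → ℝ))}

noncomputable instance (n : ℕ) : MetricSpace (PolytopeSpace n) :=
  inferInstanceAs (MetricSpace {K : NonemptyCompacts (Fin n → ℝ) //
    IsPolytope (K : Set (Fin n → ℝ))})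

/-!
The sign `(-1) ^ dim P` is a function of `dim P`, which is lower semicontinuous: affinely
independent points of `P` stay affinely independent when moved slightly, and Hausdorff-close
polytopes have points close to any given points of `P`. For the indicator, a compact convex `P`
has `0` in its relative interior iff `P` is invariant under the homothety `x ↦ -x / (m + 1)` for
some `m : ℕ`; each invariance condition is closed in the Hausdorff (= Vietoris) topology, so the
set where the indicator is nonzero is an `F_σ`.
-/

open Set Filter Topology Module

namespace TopologicalSpace.NonemptyCompacts

variable {α : Type*} [TopologicalSpace α]

theorem isOpen_setOf_exists_forall_mem {ι : Type*} [Finite ι] {U : Set (ι → α)}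
    (hU : IsOpen U) : IsOpen {K : NonemptyCompacts α | ∃ p ∈ U, ∀ i, p i ∈ K} := by
  refine isOpen_iff_forall_mem_open.2 fun K ⟨p, hpU, hpK⟩ => ?_
  obtain ⟨V, hV, hVU⟩ := isOpen_pi_iff'.1 hU p hpU
  refine ⟨⋂ i, {L | ((L : Set α) ∩ V i).Nonempty}, fun L hL => ?_,
    isOpen_iInter_of_finite fun i => isOpen_inter_nonempty_of_isOpen (hV i).1,
    mem_iInter.2 fun i => ⟨p i, hpK i, (hV i).2⟩⟩
  choose q hqL hqV using mem_iInter.1 hL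
  exact ⟨q, hVU fun i _ => hqV i, hqL⟩

theorem isClosed_setOf_mapsTo [T2Space α] {f : α → α} (hf : Continuous f) :
    IsClosed {K : NonemptyCompacts α | MapsTo f K K} := by
  have hsup : {K : NonemptyCompacts α | MapsTo f K K} = {K | K.map f hf ⊔ K = K} := by
    ext K
    simp [sup_eq_right, ← SetLike.coe_subset_coe, mapsTo_iff_image_subset]
  rw [hsup]
  exact isClosed_eq (hf.nonemptyCompacts_map.sup continuous_id) continuous_id

end TopologicalSpace.NonemptyCompacts

theorem le_finrank_vectorSpan_iff_exists_affineIndependent {k V P : Type*} [DivisionRing k]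
    [AddCommGroup V] [Module k V] [AddTorsor V P] [FiniteDimensional k V] {s : Set P}
    (hs : s.Nonempty) {d : ℕ} :
    d ≤ finrank k (vectorSpan k s) ↔
      ∃ p : Fin (d + 1) → P, (∀ i, p i ∈ s) ∧ AffineIndependent k p := by
  constructor
  · intro hd
    obtain ⟨t, hts, hspan, hind⟩ := exists_affineIndependent k V s
    have : Fintype t := (finite_set_of_fin_dim_affineIndependent k hind).fintype
    have : Nonempty t :=
      ((affineSpan_nonempty k).1 (hspan ▸ (affineSpan_nonempty k).2 hs)).to_subtype
    have hcard := hind.finrank_vectorSpan_add_one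
    rw [Subtype.range_coe, ← direction_affineSpan, hspan, direction_affineSpan] at hcard
    let e : Fin (d + 1) ↪ t :=
      (Fin.castLEEmb (by omega)).trans (Fintype.equivFinOfCardEq hcard.symm).symm.toEmbedding
    exact ⟨fun i => e i, fun i => hts (e i).2, hind.comp_embedding e⟩
  · rintro ⟨p, hps, hp⟩
    calc d = finrank k (vectorSpan k (range p)) := (hp.finrank_vectorSpan (by simp)).symm
      _ ≤ finrank k (vectorSpan k s) :=
        Submodule.finrank_mono (vectorSpan_mono k (range_subset_iff.2 hps))

theorem lowerSemicontinuous_finrank_vectorSpan {𝕜 E : Type*} [NontriviallyNormedField 𝕜]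
    [CompleteSpace 𝕜] [NormedAddCommGroup E] [NormedSpace 𝕜 E] [FiniteDimensional 𝕜 E] :
    LowerSemicontinuous fun K : NonemptyCompacts E => finrank 𝕜 (vectorSpan 𝕜 (K : Set E)) := by
  refine lowerSemicontinuous_iff_isOpen_preimage.2 fun d => ?_
  have hpre : (fun K : NonemptyCompacts E => finrank 𝕜 (vectorSpan 𝕜 (K : Set E))) ⁻¹' Ioi d =
      {K | ∃ p ∈ {p : Fin (d + 2) → E | AffineIndependent 𝕜 p}, ∀ i, p i ∈ K} := by
    ext K
    simp only [mem_preimage, mem_Ioi, Nat.lt_iff_add_one_le,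
      le_finrank_vectorSpan_iff_exists_affineIndependent K.nonempty]
    simp [and_comm]
  rw [hpre]
  exact NonemptyCompacts.isOpen_setOf_exists_forall_mem isOpen_setOfPred_affineIndependent

theorem mem_intrinsicInterior_iff_mem_nhdsWithin {𝕜 V P : Type*} [Ring 𝕜] [AddCommGroup V]
    [Module 𝕜 V] [TopologicalSpace P] [AddTorsor V P] {s : Set P} {x : P} :
    x ∈ intrinsicInterior 𝕜 s ↔ x ∈ affineSpan 𝕜 s ∧ s ∈ 𝓝[affineSpan 𝕜 s] x := by
  simp only [mem_intrinsicInterior, mem_interior_iff_mem_nhds]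
  exact ⟨fun ⟨y, hy, hyx⟩ => hyx ▸ ⟨y.2, preimage_coe_mem_nhds_subtype.1 hy⟩,
    fun ⟨hx, hs⟩ => ⟨⟨x, hx⟩, preimage_coe_mem_nhds_subtype.2 hs, rfl⟩⟩

section ZeroMemIntrinsicInterior

variable {E : Type*} [NormedAddCommGroup E] [NormedSpace ℝ E] {s : Set E}

theorem eventually_mapsTo_smul_of_zero_mem_intrinsicInterior (hb : Bornology.IsBounded s)
    (h : 0 ∈ intrinsicInterior ℝ s) : ∀ᶠ c in 𝓝 (0 : ℝ), MapsTo (c • ·) s s := by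
  obtain ⟨h0, hs⟩ := mem_intrinsicInterior_iff_mem_nhdsWithin.1 h
  obtain ⟨ε, hε, hball⟩ := Metric.mem_nhdsWithin_iff.1 hs
  obtain ⟨R, hR, hsR⟩ := hb.exists_pos_norm_le
  filter_upwards [Metric.ball_mem_nhds (0 : ℝ) (div_pos hε hR)] with c hc x hx
  refine hball ⟨mem_ball_zero_iff.2 ?_, by
    simpa using (affineSpan ℝ s).smul_vsub_vadd_mem c (subset_affineSpan ℝ s hx) h0 h0⟩
  rw [mem_ball_zero_iff, lt_div_iff₀ hR] at hc
  calc ‖c • x‖ = ‖c‖ * ‖x‖ := norm_smul c x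
    _ ≤ ‖c‖ * R := by gcongr; exact hsR x hx
    _ < ε := hc

theorem zero_mem_intrinsicInterior_of_mapsTo_neg_smul [FiniteDimensional ℝ E]
    (hs : Convex ℝ s) (hne : s.Nonempty) {c : ℝ} (hc : 0 < c) (h : MapsTo ((-c) • ·) s s) :
    0 ∈ intrinsicInterior ℝ s := by
  obtain ⟨z, hz⟩ := hne.intrinsicInterior hs
  obtain ⟨hzA, hzs⟩ := mem_intrinsicInterior_iff_mem_nhdsWithin.1 hz
  have ha : 0 < c / (1 + c) := by positivity
  have hb : 0 < 1 / (1 + c) := by positivity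
  have hab : c / (1 + c) + 1 / (1 + c) = 1 := by field_simp; ring
  -- `φ` inverts the homothety with centre `-c • z` and ratio `c / (1 + c)`, which sends `z` to `0`
  -- and, by convexity, `s` into `s`
  let φ : E → E := fun y => (c / (1 + c))⁻¹ • y + z
  have hφ0 : φ 0 = z := by simp [φ]
  have hcombo : ∀ y : E, (c / (1 + c)) • φ y + (1 / (1 + c)) • ((-c) • z) = y := by
    intro y
    rw [smul_add, smul_inv_smul₀ ha.ne', smul_smul, add_assoc, ← add_smul]
    field_simp
    simp
  have hmem : ∀ y, φ y ∈ s → y ∈ s := fun y hy =>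
    hcombo y ▸ hs hy (h (intrinsicInterior_subset hz)) ha.le hb.le hab
  have h0 : (0 : E) ∈ affineSpan ℝ s :=
    subset_affineSpan ℝ s (hmem 0 (hφ0 ▸ intrinsicInterior_subset hz))
  have hφ : Tendsto φ (𝓝[affineSpan ℝ s] 0) (𝓝[affineSpan ℝ s] z) := hφ0 ▸
    (Continuous.continuousWithinAt (by fun_prop)).tendsto_nhdsWithin fun y hy =>
      by simpa [φ] using (affineSpan ℝ s).smul_vsub_vadd_mem _ hy h0 hzA
  exact mem_intrinsicInterior_iff_mem_nhdsWithin.2 ⟨h0, mem_of_superset (hφ hzs) hmem⟩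

theorem zero_mem_intrinsicInterior_iff_exists_nat_mapsTo [FiniteDimensional ℝ E]
    (hs : Convex ℝ s) (hne : s.Nonempty) (hb : Bornology.IsBounded s) :
    0 ∈ intrinsicInterior ℝ s ↔ ∃ m : ℕ, MapsTo ((-(1 / ((m : ℝ) + 1))) • ·) s s := by
  refine ⟨fun h => ?_, fun ⟨m, hm⟩ =>
    zero_mem_intrinsicInterior_of_mapsTo_neg_smul hs hne Nat.one_div_pos_of_nat hm⟩
  have hlim : Tendsto (fun m : ℕ => -(1 / ((m : ℝ) + 1))) atTop (𝓝 0) := by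
    simpa only [neg_zero] using (tendsto_one_div_add_atTop_nhds_zero_nat (𝕜 := ℝ)).neg
  exact (hlim.eventually (eventually_mapsTo_smul_of_zero_mem_intrinsicInterior hb h)).exists

end ZeroMemIntrinsicInterior

theorem measurable_relint_indicator (n : ℕ) :
    @Measurable (PolytopeSpace n) ℝ (borel (PolytopeSpace n)) _
      (fun P => if (0 : Fin n → ℝ) ∈ intrinsicInterior ℝ (P.1 : Set (Fin n → ℝ)) then
        (-1 : ℝ) ^ pdim (P.1 : Set (Fin n → ℝ)) else 0) := by
  let _ : MeasurableSpace (PolytopeSpace n) := borel (PolytopeSpace n)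
  have _ : BorelSpace (PolytopeSpace n) := ⟨rfl⟩
  have hval : Continuous fun P : PolytopeSpace n => P.1 := continuous_subtype_val
  have hrelint : {P : PolytopeSpace n | (0 : Fin n → ℝ) ∈ intrinsicInterior ℝ (P.1 : Set _)} =
      ⋃ m : ℕ, (fun P : PolytopeSpace n => P.1) ⁻¹'
        {K | MapsTo ((-(1 / ((m : ℝ) + 1))) • ·) (K : Set (Fin n → ℝ)) K} := by
    ext P
    obtain ⟨S, -, hPS⟩ := P.2
    simp only [mem_ofPred_eq, mem_iUnion, mem_preimage]
    exact zero_mem_intrinsicInterior_iff_exists_nat_mapsTo (hPS ▸ convex_convexHull ℝ _)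
      P.1.nonempty P.1.isCompact.isBounded
  have hdim : Measurable fun P : PolytopeSpace n => pdim (P.1 : Set (Fin n → ℝ)) := by
    have hpdim : (fun P : PolytopeSpace n => pdim (P.1 : Set (Fin n → ℝ))) =
        (fun K : NonemptyCompacts (Fin n → ℝ) => finrank ℝ (vectorSpan ℝ (K : Set (Fin n → ℝ))))
          ∘ (fun P : PolytopeSpace n => P.1) :=
      funext fun P => by rw [Function.comp_apply, pdim, direction_affineSpan]
    rw [hpdim]
    exact (lowerSemicontinuous_finrank_vectorSpan.comp hval).measurable
  refine Measurable.ite ?_ (measurable_const.pow hdim) measurable_const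
  rw [hrelint]
  exact .iUnion fun m =>
    ((NonemptyCompacts.isClosed_setOf_mapsTo (continuous_const_smul _)).preimage hval).measurableSet
end

section
/- The valuation Φ(P) = c·(-1)^(dim P)·𝟙[0 ∈ relint P] on convex polytopes containing the origin is upper semicontinuous (with respect to the Hausdorff metric) if and only if c = 0. -/
open MeasureTheory Classical TopologicalSpace

/-- The space of convex polytopes in `ℝⁿ` containing the origin, with the Hausdorff metric. -/
def PolytopeSpace0 (n : ℕ) : Type :=
  {K : NonemptyCompacts (Fin n → ℝ) // IsPolytope (K : Set (Fin n → ℝ)) ∧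
    (0 : Fin n → ℝ) ∈ (K : Set (Fin n → ℝ))}

noncomputable instance (n : ℕ) : MetricSpace (PolytopeSpace0 n) :=
  inferInstanceAs (MetricSpace {K : NonemptyCompacts (Fin n → ℝ) //
    IsPolytope (K : Set (Fin n → ℝ)) ∧ (0 : Fin n → ℝ) ∈ (K : Set (Fin n → ℝ))})

/-!
A cross-polytope `conv {0, ±v₁, …, ±v_k}` with linearly independent `vᵢ` has dimension `k` and
contains `0` in its relative interior, so `Φ = relintValuation c` equals `c (-1)^k` on it. Adding
a further independent direction `±s w` changes the polytope by at most `s ‖w‖` in the Hausdorff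
metric but flips the sign of `Φ`. Upper semicontinuity thus forces `c (-1)^(k+1) ≤ c (-1)^k`; the
cases `k = 0` (segments shrinking to `{0}`) and `k = 1` (rhombi flattening onto a segment, which
needs `n ≥ 2`) give `-c ≤ c ≤ -c`.
-/

open Filter Topology Set Metric Pointwise

theorem UpperSemicontinuousAt.le_of_tendsto {X α β : Type*} [TopologicalSpace X] [LinearOrder β]
    {f : X → β} {x : X} (hf : UpperSemicontinuousAt f x) {u : α → X} {l : Filter α} [l.NeBot]
    (hu : Tendsto u l (𝓝 x)) {b : β} (hb : ∀ᶠ a in l, b ≤ f (u a)) : b ≤ f x := by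
  by_contra! hlt
  obtain ⟨a, hba, hfa⟩ := (hb.and (hu.eventually (hf b hlt))).exists
  exact (hba.trans_lt hfa).false

theorem mem_intrinsicInterior_of_inter_affineSpan_subset {𝕜 V P : Type*} [Ring 𝕜]
    [AddCommGroup V] [Module 𝕜 V] [TopologicalSpace P] [AddTorsor V P] {s U : Set P} {x : P}
    (hx : x ∈ s) (hU : U ∈ 𝓝 x) (hUs : U ∩ affineSpan 𝕜 s ⊆ s) :
    x ∈ intrinsicInterior 𝕜 s := by
  refine mem_intrinsicInterior.2 ⟨⟨x, subset_affineSpan 𝕜 s hx⟩, ?_, rfl⟩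
  rw [mem_interior_iff_mem_nhds]
  exact mem_of_superset (continuousAt_subtype_val.preimage_mem_nhds hU)
    fun y hy => hUs ⟨hy, y.2⟩

theorem hausdorffDist_convexHull_le {E : Type*} [SeminormedAddCommGroup E] [NormedSpace ℝ E]
    {s t : Set E} {r : ℝ} (hr : 0 ≤ r) (hts : t ⊆ s) (hst : s ⊆ t + closedBall 0 r) :
    hausdorffDist (convexHull ℝ s) (convexHull ℝ t) ≤ r := by
  have hhull : convexHull ℝ s ⊆ convexHull ℝ t + closedBall 0 r :=
    convexHull_min (hst.trans (add_subset_add_right (subset_convexHull ℝ t)))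
      ((convex_convexHull ℝ t).add (convex_closedBall 0 r))
  refine hausdorffDist_le_of_mem_dist hr ?_ fun y hy => ⟨y, convexHull_mono hts hy, by simpa⟩
  intro x hx
  obtain ⟨y, hy, z, hz, rfl⟩ := hhull hx
  exact ⟨y, hy, by simpa [dist_eq_norm] using hz⟩

section CrossPolytope

variable {E ι : Type*} [AddCommGroup E] (v : ι → E)

def crossVertices : Set E := insert 0 (range v ∪ -range v)

theorem crossVertices_finite [Finite ι] : (crossVertices v).Finite :=
  ((finite_range v).union (finite_range v).neg).insert 0

theorem crossVertices_subset_cons {k : ℕ} (w : E) (v : Fin k → E) :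
    crossVertices v ⊆ crossVertices (Fin.cons w v : Fin (k + 1) → E) := by
  rw [crossVertices, crossVertices, Fin.range_cons]
  gcongr <;> simp

variable [Module ℝ E]

def crossPolytope : Set E := convexHull ℝ (crossVertices v)

theorem zero_mem_crossPolytope : (0 : E) ∈ crossPolytope v :=
  subset_convexHull ℝ _ (mem_insert 0 _)

theorem smul_mem_crossPolytope (i : ι) {t : ℝ} (ht : |t| ≤ 1) : t • v i ∈ crossPolytope v := by
  obtain ⟨ht₁, ht₂⟩ := abs_le.1 ht
  have hneg : -v i ∈ crossPolytope v :=
    subset_convexHull ℝ _ (.inr (.inr (by simp)))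
  have hpos : v i ∈ crossPolytope v := subset_convexHull ℝ _ (.inr (.inl (mem_range_self i)))
  have hcomb : ((1 - t) / 2) • -v i + ((1 + t) / 2) • v i = t • v i := by module
  rw [← hcomb]
  exact convex_convexHull ℝ _ hneg hpos (by linarith) (by linarith) (by ring)

theorem sum_smul_mem_crossPolytope [Fintype ι] {a : ι → ℝ}
    (ha : ∀ i, |a i| * Fintype.card ι ≤ 1) : ∑ i, a i • v i ∈ crossPolytope v := by
  rcases isEmpty_or_nonempty ι with hι | hι
  · simpa using zero_mem_crossPolytope v
  have hcard : (0 : ℝ) < Fintype.card ι := by exact_mod_cast Fintype.card_pos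
  have hsum : ∑ i, a i • v i = ∑ i, (Fintype.card ι : ℝ)⁻¹ • ((Fintype.card ι * a i) • v i) := by
    refine Finset.sum_congr rfl fun i _ => ?_
    rw [smul_smul, inv_mul_cancel_left₀ hcard.ne']
  rw [hsum]
  refine (convex_convexHull ℝ _).sum_mem (fun _ _ => by positivity) ?_ fun i _ =>
    smul_mem_crossPolytope v i ?_
  · simp [Finset.card_univ, hcard.ne']
  · rw [abs_mul, abs_of_pos hcard, mul_comm]
    exact ha i

theorem vectorSpan_crossVertices :
    vectorSpan ℝ (crossVertices v) = Submodule.span ℝ (range v) := by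
  rw [crossVertices, vectorSpan_eq_span_vsub_set_right ℝ (mem_insert 0 _)]
  simp only [vsub_eq_sub, sub_zero, image_id']
  rw [Submodule.span_insert_zero, Submodule.span_union, Submodule.span_neg, sup_idem]

theorem direction_affineSpan_crossPolytope :
    (affineSpan ℝ (crossPolytope v)).direction = Submodule.span ℝ (range v) := by
  rw [crossPolytope, affineSpan_convexHull, direction_affineSpan, vectorSpan_crossVertices]

theorem mem_span_of_mem_affineSpan_crossPolytope {x : E}
    (hx : x ∈ affineSpan ℝ (crossPolytope v)) : x ∈ Submodule.span ℝ (range v) := by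
  rw [← direction_affineSpan_crossPolytope, ← sub_zero x, ← vsub_eq_sub]
  exact AffineSubspace.vsub_mem_direction hx (subset_affineSpan ℝ _ (zero_mem_crossPolytope v))

theorem finrank_direction_affineSpan_crossPolytope [Fintype ι] (hv : LinearIndependent ℝ v) :
    Module.finrank ℝ (affineSpan ℝ (crossPolytope v)).direction = Fintype.card ι := by
  rw [direction_affineSpan_crossPolytope, finrank_span_eq_card hv]

end CrossPolytope

section NormedCrossPolytope

variable {E : Type*} [NormedAddCommGroup E]

theorem crossVertices_cons_subset_add_closedBall {k : ℕ} (w : E) (v : Fin k → E) :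
    crossVertices (Fin.cons w v : Fin (k + 1) → E) ⊆ crossVertices v + closedBall 0 ‖w‖ := by
  have h₀ : (0 : E) ∈ crossVertices v := mem_insert 0 _
  rw [crossVertices, Fin.range_cons]
  rintro x (rfl | (rfl | hx) | hx)
  · exact ⟨0, h₀, 0, by simp, zero_add 0⟩
  · exact ⟨0, h₀, x, by simp, zero_add x⟩
  · exact ⟨x, .inr (.inl hx), 0, by simp, add_zero x⟩
  · rcases hx with hx | hx
    · exact ⟨0, h₀, x, by simp [← hx], zero_add x⟩
    · exact ⟨x, .inr (.inr hx), 0, by simp, add_zero x⟩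

variable [NormedSpace ℝ E]

theorem hausdorffDist_crossPolytope_cons_le {k : ℕ} (w : E) (v : Fin k → E) :
    hausdorffDist (crossPolytope (Fin.cons w v : Fin (k + 1) → E)) (crossPolytope v) ≤ ‖w‖ :=
  hausdorffDist_convexHull_le (norm_nonneg w) (crossVertices_subset_cons w v)
    (crossVertices_cons_subset_add_closedBall w v)

theorem zero_mem_intrinsicInterior_crossPolytope {ι : Type*} [Fintype ι] {v : ι → E}
    (hv : LinearIndependent ℝ v) : (0 : E) ∈ intrinsicInterior ℝ (crossPolytope v) := by
  let b := Module.Basis.span hv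
  have := Module.Finite.of_basis b
  let f := b.equivFun.toContinuousLinearEquiv
  -- Points of the span close to `0` have coordinates below `1 / (card ι + 1)`.
  have hε : (0 : ℝ) < ((Fintype.card ι : ℝ) + 1)⁻¹ := by positivity
  obtain ⟨δ, hδ, hf⟩ := Metric.continuousAt_iff.1 (f.continuous.continuousAt (x := 0)) _ hε
  refine mem_intrinsicInterior_of_inter_affineSpan_subset (zero_mem_crossPolytope v)
    (ball_mem_nhds 0 hδ) ?_
  rintro x ⟨hxδ, hxA⟩
  have hxW := mem_span_of_mem_affineSpan_crossPolytope v hxA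
  have hfx : ‖f ⟨x, hxW⟩‖ < ((Fintype.card ι : ℝ) + 1)⁻¹ := by
    simpa using hf (x := ⟨x, hxW⟩) (by simpa using hxδ)
  have hx : x = ∑ i, f ⟨x, hxW⟩ i • v i := by
    have := congrArg Subtype.val (b.sum_equivFun ⟨x, hxW⟩)
    simpa [b, f, Module.Basis.span_apply] using this.symm
  rw [hx]
  refine sum_smul_mem_crossPolytope v fun i => ?_
  have hi := (norm_le_pi_norm (f ⟨x, hxW⟩) i).trans_lt hfx
  rw [Real.norm_eq_abs] at hi
  have hcard : (0 : ℝ) < Fintype.card ι + 1 := by positivity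
  calc |f ⟨x, hxW⟩ i| * Fintype.card ι ≤ |f ⟨x, hxW⟩ i| * (Fintype.card ι + 1) := by
        gcongr; linarith
    _ ≤ 1 := by rw [← le_div_iff₀ hcard, one_div]; exact hi.le

end NormedCrossPolytope

namespace PolytopeSpace0

variable {n : ℕ}

noncomputable def cross {ι : Type*} [Finite ι] (v : ι → Fin n → ℝ) : PolytopeSpace0 n :=
  ⟨⟨⟨crossPolytope v, (crossVertices_finite v).isCompact_convexHull ℝ⟩,
      ⟨0, zero_mem_crossPolytope v⟩⟩,
    ⟨(crossVertices_finite v).toFinset, ⟨0, by simp [crossVertices]⟩, by simp [crossPolytope]⟩,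
    zero_mem_crossPolytope v⟩

theorem coe_cross {ι : Type*} [Finite ι] (v : ι → Fin n → ℝ) :
    ((cross v).1 : Set (Fin n → ℝ)) = crossPolytope v :=
  rfl

theorem tendsto_cross_cons {k : ℕ} (w : Fin n → ℝ) (v : Fin k → Fin n → ℝ) :
    Tendsto (fun s : ℝ => cross (Fin.cons (s • w) v : Fin (k + 1) → Fin n → ℝ)) (𝓝 0)
      (𝓝 (cross v)) := by
  have hw : Tendsto (fun s : ℝ => ‖s • w‖) (𝓝 0) (𝓝 0) := by
    simpa using (continuous_id.smul continuous_const).norm.tendsto' (0 : ℝ) _ (by simp)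
  refine tendsto_iff_dist_tendsto_zero.2 (squeeze_zero (fun _ => dist_nonneg) (fun s => ?_) hw)
  exact hausdorffDist_crossPolytope_cons_le (s • w) v

noncomputable def relintValuation (c : ℝ) (P : PolytopeSpace0 n) : ℝ :=
  c * (if (0 : Fin n → ℝ) ∈ intrinsicInterior ℝ (P.1 : Set (Fin n → ℝ)) then
    (-1 : ℝ) ^ pdim (P.1 : Set (Fin n → ℝ)) else 0)

theorem relintValuation_cross {ι : Type*} [Fintype ι] {v : ι → Fin n → ℝ}
    (hv : LinearIndependent ℝ v) (c : ℝ) :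
    relintValuation c (cross v) = c * (-1) ^ Fintype.card ι := by
  rw [relintValuation, coe_cross, if_pos (zero_mem_intrinsicInterior_crossPolytope hv), pdim,
    finrank_direction_affineSpan_crossPolytope v hv]

theorem mul_neg_one_pow_succ_le_of_upperSemicontinuous {c : ℝ}
    (hc : UpperSemicontinuous (relintValuation (n := n) c)) {k : ℕ} {u : Fin (k + 1) → Fin n → ℝ}
    (hu : LinearIndependent ℝ u) : c * (-1) ^ (k + 1) ≤ c * (-1) ^ k := by
  obtain ⟨htail, hhead⟩ := linearIndependent_finCons.1 (Fin.cons_self_tail u ▸ hu)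
  have hcons (s : ℝ) (hs : s ≠ 0) :
      LinearIndependent ℝ (Fin.cons (s • u 0) (Fin.tail u) : Fin (k + 1) → Fin n → ℝ) :=
    linearIndependent_finCons.2
      ⟨htail, fun h => hhead (by simpa [hs] using Submodule.smul_mem _ s⁻¹ h)⟩
  have hlim := (tendsto_cross_cons (u 0) (Fin.tail u)).mono_left (nhdsWithin_le_nhds (s := {0}ᶜ))
  have hval : ∀ᶠ s in 𝓝[≠] (0 : ℝ),
      c * (-1) ^ (k + 1) ≤ relintValuation c (cross (Fin.cons (s • u 0) (Fin.tail u))) := by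
    filter_upwards [self_mem_nhdsWithin] with s hs
    rw [relintValuation_cross (hcons s hs), Fintype.card_fin]
  have := UpperSemicontinuousAt.le_of_tendsto (hc (cross (Fin.tail u))) hlim hval
  rwa [relintValuation_cross htail, Fintype.card_fin] at this

end PolytopeSpace0

theorem usc_iff_zero (n : ℕ) (hn : 2 ≤ n) (c : ℝ) :
    UpperSemicontinuous (fun P : PolytopeSpace0 n =>
      c * (if (0 : Fin n → ℝ) ∈ intrinsicInterior ℝ (P.1 : Set (Fin n → ℝ)) then
        (-1 : ℝ) ^ pdim (P.1 : Set (Fin n → ℝ)) else 0)) ↔ c = 0 := by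
  constructor
  · intro hc
    have hbasis (k : ℕ) (hk : k + 1 ≤ n) :
        LinearIndependent ℝ (Pi.basisFun ℝ (Fin n) ∘ Fin.castLE hk) :=
      (Pi.basisFun ℝ (Fin n)).linearIndependent.comp _ (Fin.castLE_injective hk)
    have h₀ := PolytopeSpace0.mul_neg_one_pow_succ_le_of_upperSemicontinuous hc
      (hbasis 0 (by omega))
    have h₁ := PolytopeSpace0.mul_neg_one_pow_succ_le_of_upperSemicontinuous hc (hbasis 1 hn)
    norm_num at h₀ h₁
    linarith
  · rintro rfl
    simp only [zero_mul]
    exact upperSemicontinuous_const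
end

section
/- Let Ψ' be an SL(n) invariant valuation on all convex polytopes in ℝⁿ that vanishes on polytopes containing the origin and on all polytopes of dimension at most k-1, where k ≤ n-2. Then Ψ' vanishes on every k-dimensional simplex T with 0 ∉ aff T. -/
open MeasureTheory Classical

/-- `Ψ` is a valuation on the set of all convex polytopes in `ℝⁿ`. -/
def IsValuation {n : ℕ} (Ψ : Set (Fin n → ℝ) → ℝ) : Prop :=
  ∀ P Q : Set (Fin n → ℝ), IsPolytope P → IsPolytope Q → Convex ℝ (P ∪ Q) →
    Ψ P + Ψ Q = Ψ (P ∪ Q) + Ψ (P ∩ Q)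

/-- `Ψ` is `SL(n)` invariant on convex polytopes. -/
def IsSLInvariant {n : ℕ} (Ψ : Set (Fin n → ℝ) → ℝ) : Prop :=
  ∀ A : Matrix.SpecialLinearGroup (Fin n) ℝ, ∀ P : Set (Fin n → ℝ), IsPolytope P →
    Ψ (⇑(Matrix.toLin' (A : Matrix (Fin n) (Fin n) ℝ)) '' P) = Ψ P

/-!
The vertices of a `k`-simplex `T` with `0 ∉ aff T` are linearly independent, and since
`k + 1 < n` there is a spare direction in which to correct the determinant, so all such simplices
are `SL(n)` images of one another and `Ψ'` takes a common value `c` on them. Cutting `T` through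
the midpoint of an edge produces two such simplices whose union is `T` and whose intersection is a
`(k - 1)`-simplex, so the valuation property reads `c + c = c + 0`.
-/

open Set Matrix

section LinearCombination

variable {R M ι : Type*} [Ring R] [AddCommGroup M] [Module R M] [Fintype ι] [DecidableEq ι]

lemma Fintype.linearCombination_update (v : ι → M) (j : ι) (x : M) (w : ι → R) :
    Fintype.linearCombination R (Function.update v j x) w =
      Fintype.linearCombination R v w + w j • (x - v j) := by
  have hv : Function.update v j x = v + Pi.single j (x - v j) := by
    ext l; by_cases hl : l = j <;> simp [hl]
  simp [hv, Fintype.linearCombination_apply, smul_add, Finset.sum_add_distrib, Pi.single_apply]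

lemma Fintype.linearCombination_add_smul_single_sub_single (v : ι → M) (w : ι → R) (c : R)
    (i j : ι) :
    Fintype.linearCombination R v (w + c • (Pi.single i 1 - Pi.single j 1)) =
      Fintype.linearCombination R v w + c • (v i - v j) := by
  simp

lemma Fintype.sum_add_smul_single_sub_single (w : ι → R) (c : R) (i j : ι) :
    ∑ l, (w + c • (Pi.single i 1 - Pi.single j 1) : ι → R) l = ∑ l, w l := by
  simp [Finset.sum_add_distrib, ← Finset.mul_sum]

end LinearCombination

lemma AffineIndependent.linearIndependent_of_zero_notMem_affineSpan {K V ι : Type*} [Field K]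
    [AddCommGroup V] [Module K V] [Fintype ι] {v : ι → V} (hv : AffineIndependent K v)
    (h0 : (0 : V) ∉ affineSpan K (range v)) : LinearIndependent K v := by
  refine Fintype.linearIndependent_iff.2 fun c hc => ?_
  by_cases hs : ∑ i, c i = 0
  · exact fun i => hv.eq_zero_of_sum_eq_zero hs hc i (Finset.mem_univ i)
  · refine absurd ?_ h0
    have hw : ∑ i, (∑ j, c j)⁻¹ * c i = 1 := by rw [← Finset.mul_sum, inv_mul_cancel₀ hs]
    convert affineCombination_mem_affineSpan hw v
    rw [Finset.affineCombination_eq_linear_combination _ _ _ hw]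
    simp_rw [mul_smul, ← Finset.smul_sum, hc, smul_zero]

lemma LinearIndependent.exists_extend_castLE {K V : Type*} [Field K] [AddCommGroup V]
    [Module K V] {m n : ℕ} (hmn : m ≤ n) (hn : n ≤ Module.finrank K V) {v : Fin m → V}
    (hv : LinearIndependent K v) :
    ∃ C : Fin n → V, LinearIndependent K C ∧ C ∘ Fin.castLE hmn = v := by
  induction n, hmn using Nat.le_induction with
  | base => exact ⟨v, hv, rfl⟩
  | succ n hmn ih =>
    obtain ⟨C, hC, hCv⟩ := ih (by omega)
    obtain ⟨x, hx⟩ := exists_linearIndependent_snoc_of_lt_finrank hC (by omega)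
    refine ⟨Fin.snoc C x, hx, funext fun i => ?_⟩
    rw [← hCv]
    exact Fin.snoc_castSucc (α := fun _ => V) x C (Fin.castLE hmn i)

namespace Matrix.SpecialLinearGroup

/-- The columns of `A` are those of the matrix `M` with columns `C`, except column `j₀`, which is
rescaled by `(det M)⁻¹`. -/
lemma exists_mulVec_single_eq {K ι : Type*} [Field K] [Fintype ι] [DecidableEq ι]
    {C : ι → ι → K} (hC : LinearIndependent K C) (j₀ : ι) :
    ∃ A : SpecialLinearGroup ι K,
      ∀ l, l ≠ j₀ → (A : Matrix ι ι K) *ᵥ Pi.single l 1 = C l := by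
  set M : Matrix ι ι K := (of C)ᵀ
  have hM : M.det ≠ 0 :=
    ((isUnit_iff_isUnit_det M).1 (linearIndependent_cols_iff_isUnit.1 hC)).ne_zero
  set D := diagonal (Function.update 1 j₀ M.det⁻¹)
  refine ⟨⟨M * D, ?_⟩, fun l hl => ?_⟩
  · rw [det_mul, det_diagonal, Finset.prod_update_of_mem (Finset.mem_univ _)]
    simp [hM]
  · rw [coe_mk, ← mulVec_mulVec, mulVec_single_one]
    ext a
    simp [D, M, mulVec, dotProduct, diagonal_apply, Function.update_apply, hl]

lemma exists_mulVec_single_castLE_eq {K : Type*} [Field K] {m n : ℕ} (hmn : m < n)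
    {v : Fin m → Fin n → K} (hv : LinearIndependent K v) :
    ∃ A : SpecialLinearGroup (Fin n) K,
      ∀ i, (A : Matrix (Fin n) (Fin n) K) *ᵥ Pi.single (Fin.castLE hmn.le i) 1 = v i := by
  obtain ⟨C, hC, hCv⟩ := hv.exists_extend_castLE hmn.le (by simp)
  obtain ⟨A, hA⟩ := exists_mulVec_single_eq hC ⟨m, hmn⟩
  refine ⟨A, fun i => (hA _ ?_).trans (congrFun hCv i)⟩
  exact Fin.ne_of_val_ne (by simp only [Fin.val_castLE]; omega)

end Matrix.SpecialLinearGroup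

section Dissection

variable {𝕜 E ι : Type*} [Field 𝕜] [LinearOrder 𝕜] [IsStrictOrderedRing 𝕜]
  [AddCommGroup E] [Module 𝕜 E] [DecidableEq ι]

lemma LinearIndependent.update_midpoint {v : ι → E} (hv : LinearIndependent 𝕜 v) {i j : ι}
    (hij : i ≠ j) : LinearIndependent 𝕜 (Function.update v j (midpoint 𝕜 (v i) (v j))) :=
  hv.update j _ ⟨2, mem_nonZeroDivisors_of_ne_zero two_ne_zero,
    Finsupp.single i 1 + Finsupp.single j 1, by simp [hij],
    by simp [midpoint_eq_smul_add, smul_smul]⟩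

variable [Fintype ι]

lemma convexHull_range_eq_image_stdSimplex (v : ι → E) :
    convexHull 𝕜 (range v) = Fintype.linearCombination 𝕜 v '' stdSimplex 𝕜 ι := by
  rw [← convexHull_rangle_single_eq_stdSimplex, LinearMap.image_convexHull, ← range_comp]
  congr 1
  ext i
  simp

lemma add_smul_single_sub_single_mem_stdSimplex {w : ι → 𝕜} (hw : w ∈ stdSimplex 𝕜 ι)
    {i j : ι} (hij : i ≠ j) {c : 𝕜} (hc : 0 ≤ c) (hcj : c ≤ w j) :
    w + c • (Pi.single i 1 - Pi.single j 1) ∈ stdSimplex 𝕜 ι := by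
  refine ⟨fun l => ?_, (Fintype.sum_add_smul_single_sub_single w c i j).trans hw.2⟩
  by_cases hli : l = i
  · subst hli; simp [hij, add_nonneg (hw.1 l) hc]
  · by_cases hlj : l = j
    · subst hlj; simpa [hli] using hcj
    · simp [hli, hlj, hw.1 l]

lemma Fintype.linearCombination_update_midpoint (v : ι → E) (i j : ι) (w : ι → 𝕜) :
    Fintype.linearCombination 𝕜 (Function.update v j (midpoint 𝕜 (v i) (v j))) w =
      Fintype.linearCombination 𝕜 v (w + (w j / 2) • (Pi.single i 1 - Pi.single j 1)) := by
  rw [Fintype.linearCombination_update, Fintype.linearCombination_add_smul_single_sub_single,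
    midpoint_sub_right, invOf_eq_inv]
  module

lemma mem_convexHull_update_midpoint_of_le (v : ι → E) {i j : ι} (hij : i ≠ j)
    {w : ι → 𝕜} (hw : w ∈ stdSimplex 𝕜 ι) (hwij : w j ≤ w i) :
    Fintype.linearCombination 𝕜 v w ∈
      convexHull 𝕜 (range (Function.update v j (midpoint 𝕜 (v i) (v j)))) := by
  rw [convexHull_range_eq_image_stdSimplex]
  refine ⟨_, add_smul_single_sub_single_mem_stdSimplex hw hij.symm (hw.1 j) hwij, ?_⟩
  rw [Fintype.linearCombination_update, Fintype.linearCombination_add_smul_single_sub_single,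
    midpoint_sub_right, invOf_eq_inv]
  simp only [Pi.add_apply, Pi.smul_apply, Pi.sub_apply, Pi.single_eq_same,
    Pi.single_eq_of_ne hij.symm, smul_eq_mul]
  module

lemma convexHull_update_midpoint_union (v : ι → E) {i j : ι} (hij : i ≠ j) :
    convexHull 𝕜 (range (Function.update v j (midpoint 𝕜 (v i) (v j)))) ∪
      convexHull 𝕜 (range (Function.update v i (midpoint 𝕜 (v i) (v j)))) =
      convexHull 𝕜 (range v) := by
  have hm : midpoint 𝕜 (v i) (v j) ∈ convexHull 𝕜 (range v) :=
    (convex_convexHull 𝕜 _).midpoint_mem (subset_convexHull 𝕜 _ (mem_range_self i))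
      (subset_convexHull 𝕜 _ (mem_range_self j))
  have hsub : ∀ a, convexHull 𝕜 (range (Function.update v a (midpoint 𝕜 (v i) (v j)))) ⊆
      convexHull 𝕜 (range v) := by
    refine fun a => convexHull_min (range_subset_iff.2 fun l => ?_) (convex_convexHull 𝕜 _)
    by_cases hl : l = a
    · simpa [hl] using hm
    · simpa [hl] using subset_convexHull 𝕜 _ (mem_range_self l)
  refine (union_subset (hsub j) (hsub i)).antisymm ?_
  rw [convexHull_range_eq_image_stdSimplex]
  rintro _ ⟨w, hw, rfl⟩
  rcases le_total (w j) (w i) with hwij | hwji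
  · exact Or.inl (mem_convexHull_update_midpoint_of_le v hij hw hwij)
  · rw [midpoint_comm]
    exact Or.inr (mem_convexHull_update_midpoint_of_le v hij.symm hw hwji)

/-- For a common point with barycentric coordinates `u` in the first half and `t` in the second,
affine independence of `v` forces `u i = -t j`, hence `u i = 0`. -/
lemma AffineIndependent.convexHull_update_midpoint_inter {v : ι → E}
    (hv : AffineIndependent 𝕜 v) {i j : ι} (hij : i ≠ j) :
    convexHull 𝕜 (range (Function.update v j (midpoint 𝕜 (v i) (v j)))) ∩
      convexHull 𝕜 (range (Function.update v i (midpoint 𝕜 (v i) (v j)))) =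
      convexHull 𝕜 (range fun l : {l // l ≠ i} =>
        Function.update v j (midpoint 𝕜 (v i) (v j)) l) := by
  refine subset_antisymm ?_ (subset_inter (convexHull_mono ?_) (convexHull_mono ?_))
  · rintro _ ⟨hg, hh⟩
    rw [convexHull_range_eq_image_stdSimplex] at hg hh ⊢
    obtain ⟨u, hu, rfl⟩ := hg
    obtain ⟨t, ht, htu⟩ := hh
    rw [Fintype.linearCombination_update_midpoint, midpoint_comm,
      Fintype.linearCombination_update_midpoint] at htu
    have hcoord := hv.eq_of_sum_eq_sum (s := Finset.univ)
      (by rw [Fintype.sum_add_smul_single_sub_single, Fintype.sum_add_smul_single_sub_single,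
        hu.2, ht.2]) htu.symm
    have hci := hcoord i (Finset.mem_univ i)
    have hcj := hcoord j (Finset.mem_univ j)
    simp only [Pi.add_apply, Pi.smul_apply, Pi.sub_apply, Pi.single_eq_same,
      Pi.single_eq_of_ne hij, Pi.single_eq_of_ne hij.symm, sub_zero, zero_sub, smul_eq_mul, mul_one,
      mul_neg] at hci hcj
    have hui : u i = 0 := by linarith [hu.1 i, ht.1 j]
    refine ⟨fun l => u l, ⟨fun l => hu.1 l, ?_⟩, ?_⟩
    · rw [← hu.2, Fintype.sum_eq_add_sum_subtype_ne _ i, hui, zero_add]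
    · simp only [Fintype.linearCombination_apply]
      rw [Fintype.sum_eq_add_sum_subtype_ne _ i, hui, zero_smul, zero_add]
  · exact range_subset_iff.2 fun l => mem_range_self _
  · refine range_subset_iff.2 fun ⟨l, hli⟩ => ?_
    by_cases hlj : l = j
    · exact ⟨i, by simp [hlj]⟩
    · exact ⟨l, by simp [hli, hlj]⟩

end Dissection

lemma isPolytope_convexHull_range {n : ℕ} {ι : Type*} [Fintype ι] [Nonempty ι]
    (v : ι → Fin n → ℝ) : IsPolytope (convexHull ℝ (range v)) :=
  ⟨Finset.univ.image v, Finset.univ_nonempty.image v, by simp⟩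

lemma pdim_convexHull_range_le {n : ℕ} {ι : Type*} [Fintype ι] [Nonempty ι]
    (v : ι → Fin n → ℝ) : pdim (convexHull ℝ (range v)) ≤ Fintype.card ι - 1 := by
  rw [pdim, affineSpan_convexHull, direction_affineSpan]
  exact finrank_vectorSpan_range_le ℝ v (Nat.succ_pred_eq_of_pos Fintype.card_pos).symm

lemma IsSLInvariant.apply_convexHull_eq {n m : ℕ} {Ψ : Set (Fin n → ℝ) → ℝ}
    (hΨ : IsSLInvariant Ψ) (hmn : m < n) {u v : Fin m → Fin n → ℝ}
    (hu : LinearIndependent ℝ u) (hv : LinearIndependent ℝ v) :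
    Ψ (convexHull ℝ (range u)) = Ψ (convexHull ℝ (range v)) := by
  rcases m.eq_zero_or_pos with rfl | hm
  · rw [Subsingleton.elim u v]
  have : Nonempty (Fin m) := ⟨⟨0, hm⟩⟩
  suffices key : ∀ w : Fin m → Fin n → ℝ, LinearIndependent ℝ w →
      Ψ (convexHull ℝ (range w)) =
        Ψ (convexHull ℝ (range fun i => Pi.single (Fin.castLE hmn.le i) 1)) by
    rw [key u hu, key v hv]
  intro w hw
  obtain ⟨A, hA⟩ := SpecialLinearGroup.exists_mulVec_single_castLE_eq hmn hw
  have hA' := hΨ A _ (isPolytope_convexHull_range fun i => Pi.single (Fin.castLE hmn.le i) 1)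
  rw [LinearMap.image_convexHull, ← range_comp] at hA'
  simpa [Function.comp_def, hA] using hA'

theorem vanishes_on_k_simplices_general (n k : ℕ) (hk1 : 1 ≤ k) (hk2 : k ≤ n - 2)
    (Ψ' : Set (Fin n → ℝ) → ℝ) (hval : IsValuation Ψ') (hinv : IsSLInvariant Ψ')
    (hvanlow : ∀ P : Set (Fin n → ℝ), IsPolytope P → pdim P ≤ k - 1 → Ψ' P = 0) :
    ∀ v : Fin (k + 1) → (Fin n → ℝ), AffineIndependent ℝ v →
      (0 : Fin n → ℝ) ∉ affineSpan ℝ (Set.range v) →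
      Ψ' (convexHull ℝ (Set.range v)) = 0 := by
  intro v hv h0
  have hkn : k + 1 < n := by omega
  have : NeZero k := ⟨by omega⟩
  have h01 : (0 : Fin (k + 1)) ≠ 1 := zero_ne_one
  have hli := hv.linearIndependent_of_zero_notMem_affineSpan h0
  have hΨ₁ : Ψ' (convexHull ℝ (range (Function.update v 1 (midpoint ℝ (v 0) (v 1))))) =
      Ψ' (convexHull ℝ (range v)) :=
    hinv.apply_convexHull_eq hkn (hli.update_midpoint h01) hli
  have hΨ₀ : Ψ' (convexHull ℝ (range (Function.update v 0 (midpoint ℝ (v 0) (v 1))))) =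
      Ψ' (convexHull ℝ (range v)) := by
    rw [midpoint_comm]
    exact hinv.apply_convexHull_eq hkn (hli.update_midpoint h01.symm) hli
  have : Nonempty {l : Fin (k + 1) // l ≠ 0} := ⟨⟨1, h01.symm⟩⟩
  have hpdim : pdim (convexHull ℝ (range fun l : {l : Fin (k + 1) // l ≠ 0} =>
      Function.update v 1 (midpoint ℝ (v 0) (v 1)) l)) ≤ k - 1 :=
    (pdim_convexHull_range_le _).trans (by simp [Fintype.card_subtype_compl])
  have hΨcap := hvanlow _ (isPolytope_convexHull_range _) hpdim
  have hsplit := hval _ _ (isPolytope_convexHull_range _) (isPolytope_convexHull_range _)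
    (by rw [convexHull_update_midpoint_union v h01]; exact convex_convexHull ℝ _)
  rw [convexHull_update_midpoint_union v h01, hv.convexHull_update_midpoint_inter h01,
    hΨ₁, hΨ₀, hΨcap] at hsplit
  linarith

theorem vanishes_on_k_simplices (n k : ℕ) (hn : 3 ≤ n) (hk1 : 1 ≤ k) (hk2 : k ≤ n - 2)
    (Ψ' : Set (Fin n → ℝ) → ℝ) (hval : IsValuation Ψ') (hinv : IsSLInvariant Ψ')
    (hvan0 : ∀ P : Set (Fin n → ℝ), IsPolytope P → (0 : Fin n → ℝ) ∈ P → Ψ' P = 0)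
    (hvanlow : ∀ P : Set (Fin n → ℝ), IsPolytope P → pdim P ≤ k - 1 → Ψ' P = 0) :
    ∀ v : Fin (k + 1) → (Fin n → ℝ), AffineIndependent ℝ v →
      (0 : Fin n → ℝ) ∉ affineSpan ℝ (Set.range v) →
      Ψ' (convexHull ℝ (Set.range v)) = 0 :=
  vanishes_on_k_simplices_general n k hk1 hk2 Ψ' hval hinv hvanlow
end
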